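/- arXiv:1702.04401 — 2 statements merged into one kernel-verified Lean document; each statement's English description precedes it below -/
import Mathlib

section
/- For all x in (0, π), t in [0,1], and real N ≥ 3, sin(t·x) − t·x·cos(t·x) ≥ t^N·(sin(x) − x·cos(x)). -/
/-!
Write `g u = sin u - u cos u`, so that `g' u = u sin u`. The claim for `N = 3` says that
`g u / u ^ 3` is antitone on `(0, π]`; its derivative is `(u ^ 2 sin u - 3 g u) / u ^ 4`, and
`φ u = 3 g u - u ^ 2 sin u` is nonnegative there because `φ 0 = 0` and `φ' u = u g u ≥ 0`.
Since `g ≥ 0` on `[0, π]` as well, larger exponents `N` only make the right-hand side smaller.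
-/

open Real Set

lemma nonneg_of_hasDerivAt_of_nonneg {f f' : ℝ → ℝ} {a u : ℝ}
    (hf : ∀ v, HasDerivAt f (f' v) v) (hf' : ∀ v ∈ Ioo 0 a, 0 ≤ f' v) (hf0 : f 0 = 0)
    (hu : u ∈ Icc 0 a) : 0 ≤ f u := by
  have hmono : MonotoneOn f (Icc 0 a) := by
    refine monotoneOn_of_hasDerivWithinAt_nonneg (convex_Icc 0 a)
      (fun v _ ↦ (hf v).continuousAt.continuousWithinAt)
      (fun v _ ↦ (hf v).hasDerivWithinAt) ?_
    rw [interior_Icc]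
    exact hf'
  exact hf0 ▸ hmono (left_mem_Icc.2 (hu.1.trans hu.2)) hu hu.1

lemma hasDerivAt_sin_sub_mul_cos (u : ℝ) :
    HasDerivAt (fun u ↦ sin u - u * cos u) (u * sin u) u := by
  refine ((hasDerivAt_sin u).sub ((hasDerivAt_id u).mul (hasDerivAt_cos u))).congr_deriv ?_
  simp

lemma sin_sub_mul_cos_nonneg {u : ℝ} (hu : u ∈ Icc 0 π) : 0 ≤ sin u - u * cos u :=
  nonneg_of_hasDerivAt_of_nonneg (f := fun v ↦ sin v - v * cos v) hasDerivAt_sin_sub_mul_cos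
    (fun v hv ↦ mul_nonneg hv.1.le (sin_nonneg_of_nonneg_of_le_pi hv.1.le hv.2.le))
    (by simp) hu

lemma sq_mul_sin_le_three_mul_sin_sub_mul_cos {u : ℝ} (hu : u ∈ Icc 0 π) :
    u ^ 2 * sin u ≤ 3 * (sin u - u * cos u) := by
  have hderiv (v : ℝ) : HasDerivAt (fun v ↦ 3 * (sin v - v * cos v) - v ^ 2 * sin v)
      (v * (sin v - v * cos v)) v := by
    refine (((hasDerivAt_sin_sub_mul_cos v).const_mul 3).sub
      ((hasDerivAt_pow 2 v).mul (hasDerivAt_sin v))).congr_deriv ?_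
    simp only [Nat.cast_ofNat]
    ring
  have := nonneg_of_hasDerivAt_of_nonneg hderiv
    (fun v hv ↦ mul_nonneg hv.1.le (sin_sub_mul_cos_nonneg (Ioo_subset_Icc_self hv)))
    (by simp) hu
  linarith

lemma antitoneOn_sin_sub_mul_cos_div_pow_three :
    AntitoneOn (fun u ↦ (sin u - u * cos u) / u ^ 3) (Ioc 0 π) := by
  have hderiv {u : ℝ} (hu : u ≠ 0) : HasDerivAt (fun u ↦ (sin u - u * cos u) / u ^ 3)
      ((u ^ 2 * sin u - 3 * (sin u - u * cos u)) / u ^ 4) u := by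
    refine ((hasDerivAt_sin_sub_mul_cos u).div (hasDerivAt_pow 3 u)
      (pow_ne_zero 3 hu)).congr_deriv ?_
    field_simp
    ring
  refine antitoneOn_of_hasDerivWithinAt_nonpos (convex_Ioc 0 π)
    (f' := fun u ↦ (u ^ 2 * sin u - 3 * (sin u - u * cos u)) / u ^ 4)
    (fun u hu ↦ (hderiv hu.1.ne').continuousAt.continuousWithinAt) ?_ ?_ <;> rw [interior_Ioc]
  · exact fun u hu ↦ (hderiv hu.1.ne').hasDerivWithinAt
  · intro u hu
    have := sq_mul_sin_le_three_mul_sin_sub_mul_cos (Ioo_subset_Icc_self hu)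
    exact div_nonpos_of_nonpos_of_nonneg (by linarith) (by positivity)

lemma pow_three_mul_sin_sub_mul_cos_le {x t : ℝ} (hx : x ∈ Ioc 0 π) (ht : t ∈ Icc 0 1) :
    t ^ 3 * (sin x - x * cos x) ≤ sin (t * x) - t * x * cos (t * x) := by
  obtain rfl | ht0 := ht.1.eq_or_lt
  · simp
  have htx : t * x ∈ Ioc 0 π := ⟨mul_pos ht0 hx.1, by nlinarith [hx.1, hx.2, ht.2]⟩
  have hle := antitoneOn_sin_sub_mul_cos_div_pow_three htx hx
    (mul_le_of_le_one_left hx.1.le ht.2)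
  rw [div_le_div_iff₀ (pow_pos hx.1 3) (pow_pos htx.1 3), mul_pow] at hle
  exact le_of_mul_le_mul_right (by linarith) (pow_pos hx.1 3)

theorem stmt_1 (x t N : ℝ) (hx0 : 0 < x) (hxpi : x < Real.pi)
    (ht0 : 0 ≤ t) (ht1 : t ≤ 1) (hN : 3 ≤ N) :
    Real.sin (t * x) - t * x * Real.cos (t * x) ≥
      t ^ N * (Real.sin x - x * Real.cos x) := by
  have hcubic := pow_three_mul_sin_sub_mul_cos_le ⟨hx0, hxpi.le⟩ ⟨ht0, ht1⟩
  obtain rfl | ht0 := ht0.eq_or_lt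
  · simp [zero_rpow (by linarith : N ≠ 0)]
  have hpow : t ^ N ≤ t ^ 3 := by
    simpa using rpow_le_rpow_of_exponent_ge ht0 ht1 hN
  calc t ^ N * (sin x - x * cos x)
      ≤ t ^ 3 * (sin x - x * cos x) :=
        mul_le_mul_of_nonneg_right hpow (sin_sub_mul_cos_nonneg ⟨hx0.le, hxpi.le⟩)
    _ ≤ _ := hcubic
end

section
/- For all x in (0, 2π) and t in [0,1], t·x − sin(t·x) ≥ t³·(x − sin(x)). -/
/-!
For fixed `t ∈ [0, 1]`, `φ(x) = f(t x) - t³ f(x)` vanishes at `0` and has derivative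
`t ((1 - cos (t x)) - t² (1 - cos x))`. Writing `1 - cos y = 2 sin² (y / 2)`, this is nonnegative
on `[0, 2π]` because concavity of `sin` on `[0, π]` gives `sin (t u) ≥ t sin u ≥ 0`. Hence `φ` is
monotone on `[0, 2π]` and `φ(x) ≥ φ(0) = 0`.
-/

open Real Set

theorem ConcaveOn.smul_apply_le_apply_smul {𝕜 E β : Type*}
    [Ring 𝕜] [PartialOrder 𝕜] [IsOrderedRing 𝕜] [AddCommGroup E] [AddCommGroup β] [PartialOrder β]
    [Module 𝕜 E] [Module 𝕜 β]
    {s : Set E} {f : E → β} (hf : ConcaveOn 𝕜 s f) (h0 : (0 : E) ∈ s) (hf0 : f 0 = 0)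
    {x : E} (hx : x ∈ s) {t : 𝕜} (ht0 : 0 ≤ t) (ht1 : t ≤ 1) : t • f x ≤ f (t • x) := by
  simpa [hf0] using hf.2 h0 hx (sub_nonneg.2 ht1) ht0 (sub_add_cancel 1 t)

theorem Real.mul_sin_le_sin_mul {x t : ℝ} (hx0 : 0 ≤ x) (hxπ : x ≤ π) (ht0 : 0 ≤ t)
    (ht1 : t ≤ 1) : t * sin x ≤ sin (t * x) :=
  strictConcaveOn_sin_Icc.concaveOn.smul_apply_le_apply_smul ⟨le_rfl, pi_pos.le⟩ sin_zero
    ⟨hx0, hxπ⟩ ht0 ht1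

theorem Real.sq_mul_one_sub_cos_le {x t : ℝ} (hx0 : 0 ≤ x) (hx : x ≤ 2 * π) (ht0 : 0 ≤ t)
    (ht1 : t ≤ 1) : t ^ 2 * (1 - cos x) ≤ 1 - cos (t * x) := by
  have half (y : ℝ) : 1 - cos y = 2 * sin (y / 2) ^ 2 := by
    have := cos_two_mul_eq_one_sub (y / 2)
    rw [mul_div_cancel₀ _ two_ne_zero] at this
    linarith
  have hsin : t * sin (x / 2) ≤ sin (t * x / 2) := by
    rw [mul_div_assoc]; exact mul_sin_le_sin_mul (by linarith) (by linarith) ht0 ht1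
  have hsin0 : 0 ≤ t * sin (x / 2) :=
    mul_nonneg ht0 (sin_nonneg_of_nonneg_of_le_pi (by linarith) (by linarith))
  rw [half, half]
  nlinarith [pow_le_pow_left₀ hsin0 hsin 2]

theorem monotoneOn_mul_sub_sin_mul_sub_pow_three_mul_sub_sin {t : ℝ} (ht0 : 0 ≤ t)
    (ht1 : t ≤ 1) :
    MonotoneOn (fun x ↦ (t * x - sin (t * x)) - t ^ 3 * (x - sin x)) (Icc 0 (2 * π)) := by
  refine monotoneOn_of_hasDerivWithinAt_nonneg (convex_Icc _ _) (by fun_prop)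
    (f' := fun x ↦ t * ((1 - cos (t * x)) - t ^ 2 * (1 - cos x))) (fun x _ ↦ ?_) (fun x hx ↦ ?_)
  · have hmul : HasDerivAt (fun x ↦ t * x) t x := by simpa using (hasDerivAt_id x).const_mul t
    have := (hmul.sub ((hasDerivAt_sin (t * x)).comp x hmul)).sub
      (((hasDerivAt_id x).sub (hasDerivAt_sin x)).const_mul (t ^ 3))
    exact (this.congr_deriv (by ring)).hasDerivWithinAt
  · rw [interior_Icc] at hx
    exact mul_nonneg ht0 (sub_nonneg.2 (sq_mul_one_sub_cos_le hx.1.le hx.2.le ht0 ht1))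

theorem stmt_3 (x t : ℝ) (hx0 : 0 < x) (hx2pi : x < 2 * Real.pi)
    (ht0 : 0 ≤ t) (ht1 : t ≤ 1) :
    t * x - Real.sin (t * x) ≥ t ^ 3 * (x - Real.sin x) := by
  have := monotoneOn_mul_sub_sin_mul_sub_pow_three_mul_sub_sin ht0 ht1 ⟨le_rfl, by positivity⟩
    ⟨hx0.le, hx2pi.le⟩ hx0.le
  simp only [mul_zero, sin_zero, sub_zero] at this
  linarith
end
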